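/- For m, n ≥ 0, the q-identity Σ_{k=0}^{⌊n/4⌋} [m+k choose k]_{q^4} · [m+1 choose n−4k]_q · q^{C(n−4k,2)} = Σ_{k=0}^{⌊n/2⌋} (−1)^k · [m+k choose k]_{q^2} · [m+n−2k choose n−2k]_q holds as an identity of polynomials in q. -/

import Mathlib

open Polynomial

/-- Gaussian binomial coefficient `[n choose k]_q` as a polynomial in `ℤ[q]`,
defined by the Pascal-type recurrence; it is `0` when `k > n`. -/
noncomputable def gauss : ℕ → ℕ → Polynomial ℤ
  | _, 0 => 1
  | 0, _ + 1 => 0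
  | n + 1, k + 1 => gauss n (k + 1) + Polynomial.X ^ (n - k) * gauss n k

/-- `p(N,k,n)`: number of partitions of `n` into at most `k` parts, each part
positive and at most `N`. -/
noncomputable def pcount (N k n : ℕ) : ℕ :=
  Nat.card {s : Multiset ℕ //
    s.sum = n ∧ s.card ≤ k ∧ ∀ x ∈ s, 0 < x ∧ x ≤ N}

/-- `p̄_r(N₁,N₂,k₁,k₂,n)`: number of two-colored partitions of `n` with at most `k₁`
parts of the first kind, each positive, divisible by `r` and at most `N₁·r`, and at
most `k₂` parts of the second kind, each positive and at most `N₂`. -/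
noncomputable def pbar (r N1 N2 k1 k2 n : ℕ) : ℕ :=
  Nat.card {p : Multiset ℕ × Multiset ℕ //
    p.1.sum + p.2.sum = n ∧ p.1.card ≤ k1 ∧ p.2.card ≤ k2 ∧
    (∀ x ∈ p.1, 0 < x ∧ r ∣ x ∧ x ≤ N1 * r) ∧ (∀ x ∈ p.2, 0 < x ∧ x ≤ N2)}

/-- `p̄_r` with integer arguments: zero if any argument is negative. -/
noncomputable def pbarZ (r : ℕ) (N1 N2 k1 k2 n : ℤ) : ℕ :=
  if 0 ≤ N1 ∧ 0 ≤ N2 ∧ 0 ≤ k1 ∧ 0 ≤ k2 ∧ 0 ≤ n then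
    pbar r N1.toNat N2.toNat k1.toNat k2.toNat n.toNat
  else 0

/-- `Q̄_r(N₁,N₂,k₁,k₂,n)`: number of two-colored partitions of `n` with exactly `k₁`
distinct parts of the first kind, each positive, divisible by `r` and at most `N₁·r`,
and exactly `k₂` distinct parts of the second kind, each positive and at most `N₂`. -/
noncomputable def Qbar (r N1 N2 k1 k2 n : ℕ) : ℕ :=
  Nat.card {p : Multiset ℕ × Multiset ℕ //
    p.1.sum + p.2.sum = n ∧ p.1.Nodup ∧ p.2.Nodup ∧ p.1.card = k1 ∧ p.2.card = k2 ∧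
    (∀ x ∈ p.1, 0 < x ∧ r ∣ x ∧ x ≤ N1 * r) ∧ (∀ x ∈ p.2, 0 < x ∧ x ≤ N2)}


/-!
Both sides are coefficients of `xⁿ` in products of power series in `x` over `ℤ[q]`. With
`G_q(x) = ∑ⱼ [m+j choose j]_q xʲ = ∏_{i ≤ m} (1 - qⁱx)⁻¹` and the finite q-binomial theorem
`∑ₙ [m+1 choose n]_q q^C(n,2) xⁿ = ∏_{i ≤ m} (1 + qⁱx)`, the left side is the coefficient of
`G_{q⁴}(x⁴) ∏ (1 + qⁱx)` and the right side that of `G_{q²}(-x²) G_q(x)`. The two products agree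
because `1 - q⁴ⁱx⁴ = (1 + qⁱx)(1 - qⁱx)(1 + q²ⁱx²)`.
-/

lemma gauss_zero_right (n : ℕ) : gauss n 0 = 1 := by cases n <;> rfl

lemma gauss_eq_zero_of_lt : ∀ {n k : ℕ}, n < k → gauss n k = 0
  | 0, _ + 1, _ => rfl
  | n + 1, k + 1, h => by
      rw [gauss, gauss_eq_zero_of_lt (by omega), gauss_eq_zero_of_lt (by omega), mul_zero,
        add_zero]

lemma gauss_self (n : ℕ) : gauss n n = 1 := by
  induction n with
  | zero => rfl
  | succ n ih =>
    rw [gauss, gauss_eq_zero_of_lt (by omega), zero_add, Nat.sub_self, pow_zero, one_mul, ih]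

lemma aeval_gauss_succ_succ {R : Type*} [CommRing R] (q : R) (n k : ℕ) :
    aeval q (gauss (n + 1) (k + 1)) =
      aeval q (gauss n (k + 1)) + q ^ (n - k) * aeval q (gauss n k) := by
  rw [gauss, map_add, map_mul, map_pow, aeval_X]

lemma Finset.sum_range_succ_eq_sum_range_div {M : Type*} [AddCommMonoid M] {p : ℕ} (hp : p ≠ 0)
    (n : ℕ) (F : ℕ → M) (hF : ∀ i, ¬ p ∣ i → F i = 0) :
    ∑ i ∈ Finset.range (n + 1), F i = ∑ k ∈ Finset.range (n / p + 1), F (p * k) := by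
  have hle : ∀ k, k ≤ n / p ↔ p * k ≤ n := fun k => by
    rw [Nat.le_div_iff_mul_le (Nat.pos_of_ne_zero hp), mul_comm]
  symm
  refine Finset.sum_bij_ne_zero (fun k _ _ => p * k) ?_ ?_ ?_ fun _ _ _ => rfl
  · intro k hk _
    simpa [Nat.lt_succ_iff, hle] using hk
  · intro a _ _ b _ _ h
    exact Nat.eq_of_mul_eq_mul_left (Nat.pos_of_ne_zero hp) h
  · intro i hi hne
    obtain ⟨k, rfl⟩ := not_not.1 (mt (hF i) hne)
    exact ⟨k, by simpa [Nat.lt_succ_iff, hle] using hi, hne, rfl⟩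

namespace PowerSeries

variable {R : Type*} [CommRing R]

lemma rescale_C (a c : R) : rescale a (C c) = C c := by
  ext (_ | n) <;> simp [coeff_C]

lemma coeff_expand_mul_eq_sum (p : ℕ) (hp : p ≠ 0) (f g : R⟦X⟧) (n : ℕ) :
    coeff n (expand p hp f * g) =
      ∑ k ∈ Finset.range (n / p + 1), coeff k f * coeff (n - p * k) g := by
  rw [coeff_mul, Finset.Nat.sum_antidiagonal_eq_sum_range_succ
    (fun i j => coeff i (expand p hp f) * coeff j g), Finset.sum_range_succ_eq_sum_range_div hp]
  · simp only [coeff_expand_mul]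
  · intro i hi
    rw [coeff_expand_of_not_dvd p hp f hi, zero_mul]

noncomputable def gaussSeries (q : R) (m : ℕ) : R⟦X⟧ :=
  mk fun j => Polynomial.aeval q (gauss (m + j) j)

lemma one_sub_X_mul_gaussSeries_zero (q : R) : (1 - X) * gaussSeries q 0 = 1 := by
  ext (_ | j)
  · simp [gaussSeries, gauss_zero_right]
  · rw [sub_mul, one_mul, map_sub, coeff_succ_X_mul]
    simp [gaussSeries, gauss_self]

lemma one_sub_C_mul_X_mul_gaussSeries_succ (q : R) (m : ℕ) :
    (1 - C (q ^ (m + 1)) * X) * gaussSeries q (m + 1) = gaussSeries q m := by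
  ext (_ | j)
  · simp [gaussSeries, gauss_zero_right]
  · rw [sub_mul, one_mul, mul_assoc, map_sub, coeff_C_mul, coeff_succ_X_mul]
    simp only [gaussSeries, coeff_mk]
    rw [show m + 1 + (j + 1) = m + j + 1 + 1 by omega, aeval_gauss_succ_succ,
      show m + j + 1 - j = m + 1 by omega, show m + (j + 1) = m + j + 1 by omega,
      show m + 1 + j = m + j + 1 by omega]
    ring

lemma prod_one_sub_C_mul_X_mul_gaussSeries (q : R) (m : ℕ) :
    (∏ i ∈ Finset.range (m + 1), (1 - C (q ^ i) * X)) * gaussSeries q m = 1 := by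
  induction m with
  | zero => simpa using one_sub_X_mul_gaussSeries_zero q
  | succ m ih => rw [Finset.prod_range_succ, mul_assoc, one_sub_C_mul_X_mul_gaussSeries_succ, ih]

lemma prod_one_add_C_mul_X (q : R) (m : ℕ) :
    ∏ i ∈ Finset.range (m + 1), (1 + C (q ^ i) * X) =
      mk fun n => Polynomial.aeval q (gauss (m + 1) n) * q ^ n.choose 2 := by
  induction m with
  | zero =>
    ext (_ | _ | n)
    · simp [gauss_zero_right]
    · simp [coeff_X, gauss_self]
    · simp [coeff_X, gauss_eq_zero_of_lt (show 1 < n + 2 by omega)]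
  | succ m ih =>
    rw [Finset.prod_range_succ, ih]
    ext (_ | n)
    · simp [gauss_zero_right]
    · rw [mul_add, mul_one, mul_left_comm, map_add, coeff_C_mul, coeff_succ_mul_X]
      simp only [coeff_mk]
      rw [aeval_gauss_succ_succ q (m + 1) n]
      rcases le_or_gt n (m + 1) with hn | hn
      · obtain ⟨d, hd⟩ := Nat.exists_eq_add_of_le hn
        have hchoose : (n + 1).choose 2 = n.choose 2 + n := by
          simp [Nat.choose_succ_succ', add_comm]
        rw [hchoose, hd, Nat.add_sub_cancel_left]
        ring
      · simp [gauss_eq_zero_of_lt hn]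

lemma expand_gaussSeries_mul_prod_one_add_C_mul_X (q : R) (m : ℕ) :
    expand 4 (by norm_num) (gaussSeries (q ^ 4) m) *
        ∏ i ∈ Finset.range (m + 1), (1 + C (q ^ i) * X) =
      expand 2 (by norm_num) (rescale (-1) (gaussSeries (q ^ 2) m)) * gaussSeries q m := by
  set A := ∏ i ∈ Finset.range (m + 1), (1 + C (q ^ i) * X)
  set P1 := ∏ i ∈ Finset.range (m + 1), (1 - C (q ^ i) * X)
  have h1 : P1 * gaussSeries q m = 1 := prod_one_sub_C_mul_X_mul_gaussSeries q m
  have h2 := congrArg (fun f => expand 2 (by norm_num) (rescale (-1) f))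
    (prod_one_sub_C_mul_X_mul_gaussSeries (q ^ 2) m)
  have h4 := congrArg (expand 4 (by norm_num)) (prod_one_sub_C_mul_X_mul_gaussSeries (q ^ 4) m)
  simp only [map_mul, map_one] at h2 h4
  set P2 := expand 2 (by norm_num)
    (rescale (-1) (∏ i ∈ Finset.range (m + 1), (1 - C ((q ^ 2) ^ i) * X)))
  set P4 := expand 4 (by norm_num) (∏ i ∈ Finset.range (m + 1), (1 - C ((q ^ 4) ^ i) * X))
  have hfactor : P4 = A * P1 * P2 := by
    simp only [P4, A, P1, P2, map_prod, map_sub, map_one, map_mul, rescale_neg_one_X, rescale_C,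
      map_neg, expand_C, expand_X, ← Finset.prod_mul_distrib, map_pow]
    exact Finset.prod_congr rfl fun i _ => by ring
  calc _ = _ * A * (P1 * gaussSeries q m) * (P2 * _) := by rw [h1, h2, mul_one, mul_one]
    _ = (P4 * expand 4 (by norm_num) (gaussSeries (q ^ 4) m)) *
          (expand 2 (by norm_num) (rescale (-1) (gaussSeries (q ^ 2) m)) * gaussSeries q m) := by
        rw [hfactor]; ring
    _ = _ := by rw [h4, one_mul]

end PowerSeries

theorem stmt13 (m n : ℕ) :
    ∑ k ∈ Finset.range (n / 4 + 1),
        (gauss (m + k) k).comp (Polynomial.X ^ 4) * gauss (m + 1) (n - 4 * k) *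
          Polynomial.X ^ (n - 4 * k).choose 2 =
      ∑ k ∈ Finset.range (n / 2 + 1),
        (-1 : Polynomial ℤ) ^ k * (gauss (m + k) k).comp (Polynomial.X ^ 2) *
          gauss (m + n - 2 * k) (n - 2 * k) := by
  have key := congrArg (PowerSeries.coeff n)
    (PowerSeries.expand_gaussSeries_mul_prod_one_add_C_mul_X (Polynomial.X : ℤ[X]) m)
  rw [PowerSeries.prod_one_add_C_mul_X, PowerSeries.coeff_expand_mul_eq_sum,
    PowerSeries.coeff_expand_mul_eq_sum] at key
  simp only [PowerSeries.gaussSeries, PowerSeries.coeff_mk, PowerSeries.coeff_rescale] at key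
  -- `aeval` in `key` goes through `algebraInt ℤ[X]`, which is only defeq to the usual
  -- `ℤ`-algebra structure of `ℤ[X]`, so `aeval_X_left_apply` is applied by `exact`, not `simp`.
  convert key using 2 with k _ k hk
  · rw [mul_assoc]
    congr 2
    exact (aeval_X_left_apply (R := ℤ) _).symm
  · rw [Finset.mem_range] at hk
    rw [show m + n - 2 * k = m + (n - 2 * k) by omega]
    congr 1
    exact (aeval_X_left_apply (R := ℤ) _).symm
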